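/- Let 0 < p < 1, q = 0 (reverse Z channel), 0 < θ < 1 and ε > 0. Define m_COMP,revZ = (1/(1−θ))·min over d ∈ (0,∞) of 1/(−d·log(1−e^{−d}(1−p))) · k·log(n/k). If m ≥ (1+ε)·m_COMP,revZ and the design and algorithm use the minimizing d (with threshold α = 1/Δ), then noisy COMP recovers σ with high probability. -/

import Mathlib

open MeasureTheory Real Filter Set
open scoped ENNReal

noncomputable section

/-- KL divergence between Bernoulli(r) and Bernoulli(s) (natural log, boundary by continuity). -/
def klBer (r s : ℝ) : ℝ := r * Real.log (r / s) + (1 - r) * Real.log ((1 - r) / (1 - s))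

instance finsetFinMeasurableSpace (m : ℕ) : MeasurableSpace (Finset (Fin m)) := ⊤

/-- Uniform probability measure on a finset. -/
def uniformFinset {α : Type*} [MeasurableSpace α] (s : Finset α) : Measure α :=
  (s.card : ℝ≥0∞)⁻¹ • ∑ x ∈ s, Measure.dirac x

/-- Bernoulli measure on `Bool` giving probability `p` to `true`. -/
def bern (p : ℝ) : Measure Bool :=
  ENNReal.ofReal p • Measure.dirac true + ENNReal.ofReal (1 - p) • Measure.dirac false

/-- Infection-status vectors of Hamming weight `k`. -/
def sigmaSet (n k : ℕ) : Finset (Fin n → Bool) :=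
  Finset.univ.filter fun σ => (Finset.univ.filter fun i => σ i = true).card = k

/-- Constant-column designs: each individual joins exactly `Δ` of the `m` tests. -/
def designSet (n m Δ : ℕ) : Finset (Fin n → Finset (Fin m)) :=
  Finset.univ.filter fun g => ∀ i, (g i).card = Δ

/-- Sample space: (infection status, design, negative-test flips `U ~ Bern(p)`,
positive-test flips `V ~ Bern(q)`). -/
abbrev GTSpace (n m : ℕ) :=
  (Fin n → Bool) × (Fin n → Finset (Fin m)) × (Fin m → Bool) × (Fin m → Bool)

/-- Joint law of the group-testing experiment with the constant-column design and p-q noise. -/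
def gtMeasure (n m Δ k : ℕ) (p q : ℝ) : Measure (GTSpace n m) :=
  (uniformFinset (sigmaSet n k)).prod ((uniformFinset (designSet n m Δ)).prod
    ((Measure.pi fun _ : Fin m => bern p).prod (Measure.pi fun _ : Fin m => bern q)))

/-- The displayed outcome of test `a`: a truly positive test (one containing an infected
individual) is flipped to negative when `V a` holds; a truly negative test is flipped to
positive when `U a` holds. -/
def displayed {n m : ℕ} (σ : Fin n → Bool) (g : Fin n → Finset (Fin m))
    (U V : Fin m → Bool) (a : Fin m) : Bool :=
  if ∃ i, σ i = true ∧ a ∈ g i then !(V a) else U a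

/-- Number of displayed-negative tests containing individual `i`. -/
def negCount {n m : ℕ} (g : Fin n → Finset (Fin m)) (disp : Fin m → Bool) (i : Fin n) : ℕ :=
  ((g i).filter fun a => disp a = false).card

/-- Noisy COMP with threshold `α`: an individual is declared healthy iff it appears in at
least `α·Δ` displayed negative tests. -/
def compOutput {n m : ℕ} (α : ℝ) (Δ : ℕ) (g : Fin n → Finset (Fin m))
    (disp : Fin m → Bool) : Fin n → Bool :=
  fun i => !(decide (α * Δ ≤ (negCount g disp i : ℝ)))

/-- Number of displayed-positive tests in which `i` is the only individual not declared
healthy in the first (COMP) step of DD. -/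
def posCount {n m : ℕ} (α : ℝ) (Δ : ℕ) (g : Fin n → Finset (Fin m))
    (disp : Fin m → Bool) (i : Fin n) : ℕ :=
  ((g i).filter fun a => disp a = true ∧
    ∀ j : Fin n, j ≠ i → a ∈ g j → α * Δ ≤ (negCount g disp j : ℝ)).card

/-- Noisy DD with thresholds `α, β`. -/
def ddOutput {n m : ℕ} (α β : ℝ) (Δ : ℕ) (g : Fin n → Finset (Fin m))
    (disp : Fin m → Bool) : Fin n → Bool :=
  fun i => decide (¬ (α * Δ ≤ (negCount g disp i : ℝ)) ∧
    β * Δ ≤ (posCount α Δ g disp i : ℝ))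

/-- The event that noisy COMP recovers the infection status exactly. -/
def compRecovers {n m : ℕ} (α : ℝ) (Δ : ℕ) : Set (GTSpace n m) :=
  {ω | compOutput α Δ ω.2.1 (displayed ω.1 ω.2.1 ω.2.2.1 ω.2.2.2) = ω.1}

/-- The event that noisy DD recovers the infection status exactly. -/
def ddRecovers {n m : ℕ} (α β : ℝ) (Δ : ℕ) : Set (GTSpace n m) :=
  {ω | ddOutput α β Δ ω.2.1 (displayed ω.1 ω.2.1 ω.2.2.1 ω.2.2.2) = ω.1}

end

noncomputable section

/-- The quantity minimized over `d` for COMP on the reverse Z channel. -/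
def bRevZ (p d : ℝ) : ℝ := 1 / (-d * Real.log (1 - Real.exp (-d) * (1 - p)))

/-- Feasible values of the reverse-Z COMP optimization over `d ∈ (0,∞)`. -/
def compSetRevZ (p : ℝ) : Set ℝ := {x | ∃ d : ℝ, 0 < d ∧ x = bRevZ p d}

end

/-!
With threshold `1/Δ`, COMP errs only if an infected individual shows a negative test, which needs
a flipped positive test and so never happens when `q = 0`, or if a healthy individual `i` shows no
negative test, i.e. every test of `i` that contains no infected individual is flipped to positive.
A test avoids all `k` infected individuals with probability `ρ^k`, `ρ = 1 - Δ/m`, and on the slice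
of `Δ`-subsets these avoidance events are negatively dependent (a local LYM double counting), so
the second event has probability at most `(1 - ρ^k (1 - p))^Δ`. A union bound over the `n`
individuals leaves `n (1 - ρ^k (1 - p))^Δ`. With `Δ = ⌈d m / k⌉` and `m ≥ (1 + ε) m_COMP,revZ`,
`ρ^k → e^{-d}` and eventually `Δ ≥ (1 + ε/2) log n / (-log (1 - e^{-d} (1 - p)))`, so this bound is
`n^{-ε/2 + o(1)} → 0`.
-/

theorem card_sub_div_card_mem_Icc {α : Type*} [Fintype α] {Δ : ℕ} (hΔ : Δ ≤ Fintype.card α) :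
    ((Fintype.card α - Δ) / Fintype.card α : ℝ) ∈ Set.Icc 0 1 := by
  have hΔ' : (Δ : ℝ) ≤ Fintype.card α := by exact_mod_cast hΔ
  exact ⟨div_nonneg (by linarith) (Nat.cast_nonneg _),
    div_le_one_of_le₀ (by linarith [Nat.cast_nonneg (α := ℝ) Δ]) (Nat.cast_nonneg _)⟩

namespace Finset

variable {α : Type*} [DecidableEq α]

theorem card_filter_subset_powersetCard_succ {R S : Finset α} (hSR : S ⊆ R) :
    #{T ∈ R.powersetCard (#S + 1) | S ⊆ T} = #R - #S := by
  rw [← card_sdiff_of_subset hSR, ← Nat.choose_one_right #(R \ S), ← card_powersetCard]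
  refine card_nbij' (· \ S) (· ∪ S) ?_ ?_ ?_ ?_
  · intro T hT
    simp only [mem_coe, mem_filter, mem_powersetCard] at hT ⊢
    exact ⟨sdiff_subset_sdiff hT.1.1 le_rfl, by rw [card_sdiff_of_subset hT.2, hT.1.2]; omega⟩
  · intro U hU
    simp only [mem_coe, mem_filter, mem_powersetCard, subset_sdiff] at hU ⊢
    refine ⟨⟨union_subset hU.1.1 hSR, ?_⟩, subset_union_right⟩
    rw [card_union_of_disjoint hU.1.2, hU.2, add_comm]
  · intro T hT
    exact sdiff_union_of_subset (mem_filter.1 hT).2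
  · intro U hU
    exact union_sdiff_cancel_right (subset_sdiff.1 (mem_powersetCard.1 hU).1).2

theorem card_sub_mul_sum_powersetCard_le (R : Finset α) (Δ : ℕ) {F : Finset α → ℝ}
    (hF : Monotone F) :
    ((#R - Δ : ℕ) : ℝ) * ∑ S ∈ R.powersetCard Δ, F S
      ≤ (Δ + 1) * ∑ T ∈ R.powersetCard (Δ + 1), F T := by
  have hswap : ∑ T ∈ R.powersetCard (Δ + 1), ∑ S ∈ T.powersetCard Δ, F S
      = ∑ S ∈ R.powersetCard Δ, ∑ T ∈ R.powersetCard (Δ + 1) with S ⊆ T, F S := by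
    refine sum_comm' (fun T S => ?_)
    simp only [mem_powersetCard, mem_filter]
    exact ⟨fun ⟨hT, hS⟩ => ⟨⟨hT, hS.1⟩, hS.1.trans hT.1, hS.2⟩,
      fun ⟨⟨hT, hST⟩, hS⟩ => ⟨hT, hST, hS.2⟩⟩
  calc ((#R - Δ : ℕ) : ℝ) * ∑ S ∈ R.powersetCard Δ, F S
      = ∑ T ∈ R.powersetCard (Δ + 1), ∑ S ∈ T.powersetCard Δ, F S := by
        rw [hswap, mul_sum]
        refine sum_congr rfl fun S hS => ?_
        obtain ⟨hSR, rfl⟩ := mem_powersetCard.1 hS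
        rw [sum_const, card_filter_subset_powersetCard_succ hSR, nsmul_eq_mul]
    _ ≤ ∑ T ∈ R.powersetCard (Δ + 1), ∑ _S ∈ T.powersetCard Δ, F T :=
        sum_le_sum fun T _ => sum_le_sum fun S hS => hF (mem_powersetCard.1 hS).1
    _ = (Δ + 1) * ∑ T ∈ R.powersetCard (Δ + 1), F T := by
        rw [mul_sum]
        refine sum_congr rfl fun T hT => ?_
        rw [sum_const, card_powersetCard, (mem_powersetCard.1 hT).2, Nat.choose_succ_self_right,
          nsmul_eq_mul]
        push_cast
        ring

variable [Fintype α]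

-- Given `b ∉ B`, the `Δ` elements of `B` all lie off `b`, which can only help a monotone `F`
-- that ignores `b`.
theorem mul_sum_powersetCard_le_sum_filter_notMem {F : Finset α → ℝ} (hF : Monotone F) (b : α)
    (hFb : ∀ B, F (insert b B) = F B) {Δ : ℕ} (hΔ : Δ ≤ Fintype.card α) :
    ((Fintype.card α - Δ) / Fintype.card α : ℝ) * ∑ B ∈ univ.powersetCard Δ, F B
      ≤ ∑ B ∈ univ.powersetCard Δ with b ∉ B, F B := by
  have hm : (0 : ℝ) < Fintype.card α := Nat.cast_pos.2 (Fintype.card_pos_iff.2 ⟨b⟩)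
  cases Δ with
  | zero =>
    rw [filter_true_of_mem fun B hB => by simp [card_eq_zero.1 (mem_powersetCard.1 hB).2]]
    simp [hm.ne']
  | succ Δ =>
    set R := univ.erase b
    have hR : #R = Fintype.card α - 1 := by simp [R]
    have huniv : (univ : Finset α) = insert b R := (insert_erase (mem_univ b)).symm
    have hnot : ∑ B ∈ univ.powersetCard (Δ + 1) with b ∉ B, F B
        = ∑ T ∈ R.powersetCard (Δ + 1), F T := by
      congr 1
      ext B
      simp [R, subset_erase, and_comm]
    have htotal : ∑ B ∈ univ.powersetCard (Δ + 1), F B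
        = ∑ T ∈ R.powersetCard (Δ + 1), F T + ∑ S ∈ R.powersetCard Δ, F S := by
      rw [huniv, powersetCard_succ_insert (notMem_erase b univ), sum_union, sum_image]
      · simp only [hFb]
        rfl
      · intro S hS T hT hST
        simp only [mem_coe, mem_powersetCard] at hS hT
        rw [← erase_insert (notMem_mono hS.1 (notMem_erase b univ)),
          ← erase_insert (notMem_mono hT.1 (notMem_erase b univ)), hST]
      · rw [disjoint_left]
        intro T hT hT'
        obtain ⟨S, -, rfl⟩ := mem_image.1 hT'
        exact notMem_erase b univ ((mem_powersetCard.1 hT).1 (mem_insert_self b S))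
    have hLYM := card_sub_mul_sum_powersetCard_le R Δ hF
    rw [hR, Nat.sub_sub, Nat.cast_sub (by omega)] at hLYM
    rw [hnot, htotal, div_mul_eq_mul_div, div_le_iff₀ hm]
    push_cast at hLYM ⊢
    nlinarith [hLYM]

-- Negative dependence on the slice: for a uniform `Δ`-subset `B`, the mean of the product is at
-- most the product of the means `1 - ρ (1 - w a)`, where `ρ` is the probability that `a ∉ B`.
theorem sum_powersetCard_prod_ite_le {w : α → ℝ} (hw0 : ∀ a, 0 ≤ w a) (hw1 : ∀ a, w a ≤ 1)
    {Δ : ℕ} (hΔ : Δ ≤ Fintype.card α) (A : Finset α) :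
    ∑ B ∈ univ.powersetCard Δ, ∏ a ∈ A, (if a ∈ B then 1 else w a)
      ≤ (Fintype.card α).choose Δ *
          ∏ a ∈ A, (1 - (Fintype.card α - Δ) / Fintype.card α * (1 - w a)) := by
  set ρ : ℝ := (Fintype.card α - Δ) / Fintype.card α
  obtain ⟨hρ0, hρ1⟩ := card_sub_div_card_mem_Icc hΔ
  induction A using Finset.induction_on with
  | empty => simp
  | insert b A hbA ih =>
    set F : Finset α → ℝ := fun B => ∏ a ∈ A, (if a ∈ B then 1 else w a)
    have hfactor0 : ∀ a (B : Finset α), 0 ≤ (if a ∈ B then 1 else w a) := fun a B => by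
      split_ifs <;> simp [hw0]
    have hF : Monotone F := fun S T hST =>
      prod_le_prod (fun a _ => hfactor0 a S) fun a _ => by
        by_cases haS : a ∈ S
        · simp [haS, hST haS]
        · split_ifs <;> simp [hw1]
    have hFb : ∀ B, F (insert b B) = F B := fun B => prod_congr rfl fun a ha => by
      rw [if_congr (mem_insert.trans (or_iff_right (ne_of_mem_of_not_mem ha hbA))) rfl rfl]
    have hsplit : ∑ B ∈ univ.powersetCard Δ, ∏ a ∈ insert b A, (if a ∈ B then 1 else w a)
        = ∑ B ∈ univ.powersetCard Δ, F B
          - (1 - w b) * ∑ B ∈ univ.powersetCard Δ with b ∉ B, F B := by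
      rw [sum_filter, mul_sum, ← sum_sub_distrib]
      refine sum_congr rfl fun B _ => ?_
      rw [prod_insert hbA]
      split_ifs <;> ring
    have hnotMem := mul_sum_powersetCard_le_sum_filter_notMem hF b hFb hΔ
    have hb : 0 ≤ 1 - ρ * (1 - w b) := by nlinarith [hw0 b, hw1 b]
    rw [hsplit, prod_insert hbA]
    calc ∑ B ∈ univ.powersetCard Δ, F B - (1 - w b) * ∑ B ∈ univ.powersetCard Δ with b ∉ B, F B
        ≤ (1 - ρ * (1 - w b)) * ∑ B ∈ univ.powersetCard Δ, F B := by
          nlinarith [mul_le_mul_of_nonneg_left hnotMem (sub_nonneg.2 (hw1 b))]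
      _ ≤ (1 - ρ * (1 - w b)) * ((Fintype.card α).choose Δ * ∏ a ∈ A, (1 - ρ * (1 - w a))) :=
          mul_le_mul_of_nonneg_left ih hb
      _ = _ := by ring

theorem sum_piFinset_sum_update {ι β M : Type*} [Fintype ι] [DecidableEq ι] [DecidableEq β]
    [AddCommMonoid M] (s : Finset β) (j : ι) (F : (ι → β) → M) :
    ∑ g ∈ Fintype.piFinset (fun _ => s), ∑ b ∈ s, F (Function.update g j b)
      = #s • ∑ g ∈ Fintype.piFinset (fun _ => s), F g := by
  set G := Fintype.piFinset (fun _ : ι => s)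
  have hmaps : ∀ x ∈ G ×ˢ s, (Function.update x.1 j x.2, x.1 j) ∈ G ×ˢ s := by
    rintro ⟨g, b⟩ hx
    simp only [G, mem_product, Fintype.mem_piFinset] at hx ⊢
    refine ⟨fun a => ?_, hx.1 j⟩
    rcases eq_or_ne a j with rfl | h
    · simpa using hx.2
    · simpa [h] using hx.1 a
  -- resampling coordinate `j` is an involution of `G ×ˢ s`
  have hinv : ∀ x ∈ G ×ˢ s, (Function.update (Function.update x.1 j x.2) j (x.1 j),
      Function.update x.1 j x.2 j) = x := by
    rintro ⟨g, b⟩ -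
    simp
  calc ∑ g ∈ G, ∑ b ∈ s, F (Function.update g j b)
      = ∑ x ∈ G ×ˢ s, F (Function.update x.1 j x.2) :=
        (sum_product G s fun x => F (Function.update x.1 j x.2)).symm
    _ = ∑ x ∈ G ×ˢ s, F x.1 := sum_nbij' _ _ hmaps hmaps hinv hinv fun _ _ => rfl
    _ = #s • ∑ g ∈ G, F g := by rw [sum_product, smul_sum]; simp

variable {ι : Type*} [Fintype ι] [DecidableEq ι]

theorem sum_piFinset_prod_ite_le {Δ : ℕ} (hΔ : Δ ≤ Fintype.card α) (A : Finset α)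
    (K : Finset ι) {w : α → ℝ} (hw0 : ∀ a, 0 ≤ w a) (hw1 : ∀ a, w a ≤ 1) :
    ∑ g ∈ Fintype.piFinset (fun _ : ι => univ.powersetCard Δ),
        ∏ a ∈ A, (if ∃ j ∈ K, a ∈ g j then 1 else w a)
      ≤ ((Fintype.card α).choose Δ : ℝ) ^ Fintype.card ι *
          ∏ a ∈ A, (1 - ((Fintype.card α - Δ) / Fintype.card α) ^ #K * (1 - w a)) := by
  set ρ : ℝ := (Fintype.card α - Δ) / Fintype.card α
  set C : ℝ := ((Fintype.card α).choose Δ : ℝ)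
  have hC : 0 < C := Nat.cast_pos.2 (Nat.choose_pos hΔ)
  obtain ⟨hρ0, hρ1⟩ := card_sub_div_card_mem_Icc hΔ
  induction K using Finset.induction_on generalizing w with
  | empty => simp [C, Fintype.card_piFinset]
  | insert j K hjK ih =>
    set G := Fintype.piFinset (fun _ : ι => (univ : Finset α).powersetCard Δ) with hG
    -- the weight seen by the `j`-th design once the other members of `K` are fixed
    set v : (ι → Finset α) → α → ℝ := fun g a => if ∃ j' ∈ K, a ∈ g j' then 1 else w a
    have hv0 : ∀ g a, 0 ≤ v g a := fun g a => by simp only [v]; split_ifs <;> simp [hw0]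
    have hv1 : ∀ g a, v g a ≤ 1 := fun g a => by simp only [v]; split_ifs <;> simp [hw1]
    have hupdate : ∀ g B,
        ∏ a ∈ A, (if ∃ j' ∈ insert j K, a ∈ Function.update g j B j' then 1 else w a)
          = ∏ a ∈ A, (if a ∈ B then 1 else v g a) := fun g B => by
      refine prod_congr rfl fun a _ => ?_
      have hcover : (∃ j' ∈ insert j K, a ∈ Function.update g j B j') ↔
          a ∈ B ∨ ∃ j' ∈ K, a ∈ g j' := by
        rw [exists_mem_insert, Function.update_self]
        refine or_congr_right (exists_congr fun j' => and_congr_right fun hj' => ?_)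
        rw [Function.update_of_ne (ne_of_mem_of_not_mem hj' hjK)]
      simp only [hcover, v]
      split_ifs <;> simp_all
    have hstep : ∀ g, ∏ a ∈ A, (1 - ρ * (1 - v g a))
        = ∏ a ∈ A, (if ∃ j' ∈ K, a ∈ g j' then 1 else 1 - ρ * (1 - w a)) := fun g =>
      prod_congr rfl fun a _ => by simp only [v]; split_ifs <;> ring
    refine le_of_mul_le_mul_left ?_ hC
    calc C * ∑ g ∈ G, ∏ a ∈ A, (if ∃ j' ∈ insert j K, a ∈ g j' then 1 else w a)
        = ∑ g ∈ G, ∑ B ∈ univ.powersetCard Δ, ∏ a ∈ A, (if a ∈ B then 1 else v g a) := by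
          simp only [← hupdate]
          have h := sum_piFinset_sum_update (univ.powersetCard Δ) j
            fun g => ∏ a ∈ A, (if ∃ j' ∈ insert j K, a ∈ g j' then (1 : ℝ) else w a)
          rw [h, nsmul_eq_mul, card_powersetCard, card_univ]
      _ ≤ ∑ g ∈ G, C * ∏ a ∈ A, (1 - ρ * (1 - v g a)) :=
          sum_le_sum fun g _ => sum_powersetCard_prod_ite_le (hv0 g) (hv1 g) hΔ A
      _ = C * ∑ g ∈ G, ∏ a ∈ A, (if ∃ j' ∈ K, a ∈ g j' then 1 else 1 - ρ * (1 - w a)) := by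
          rw [mul_sum]; simp only [hstep]
      _ ≤ C * (C ^ Fintype.card ι * ∏ a ∈ A, (1 - ρ ^ #K * (1 - (1 - ρ * (1 - w a))))) :=
          mul_le_mul_of_nonneg_left (ih (fun a => by nlinarith [hw0 a, hw1 a])
            (fun a => by nlinarith [hw0 a, hw1 a])) hC.le
      _ = C * (C ^ Fintype.card ι * ∏ a ∈ A, (1 - ρ ^ #(insert j K) * (1 - w a))) := by
          rw [card_insert_of_notMem hjK]
          congr 2
          refine prod_congr rfl fun a _ => ?_
          ring

theorem sum_piFinset_prod_mem_ite_le {Δ : ℕ} (hΔ : Δ ≤ Fintype.card α) {i : ι} {K : Finset ι}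
    (hiK : i ∉ K) {w : ℝ} (hw0 : 0 ≤ w) (hw1 : w ≤ 1) :
    ∑ g ∈ Fintype.piFinset (fun _ : ι => (univ : Finset α).powersetCard Δ),
        ∏ a ∈ g i, (if ∃ j ∈ K, a ∈ g j then 1 else w)
      ≤ ((Fintype.card α).choose Δ : ℝ) ^ Fintype.card ι *
          (1 - ((Fintype.card α - Δ) / Fintype.card α) ^ #K * (1 - w)) ^ Δ := by
  set P := (univ : Finset α).powersetCard Δ
  set C : ℝ := ((Fintype.card α).choose Δ : ℝ)
  have hP : #P = (Fintype.card α).choose Δ := by simp [P]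
  have hC : 0 < C := Nat.cast_pos.2 (Nat.choose_pos hΔ)
  have hupdate : ∀ (g : ι → Finset α) B, ∏ a ∈ Function.update g i B i,
      (if ∃ j ∈ K, a ∈ Function.update g i B j then (1 : ℝ) else w)
        = ∏ a ∈ B, (if ∃ j ∈ K, a ∈ g j then 1 else w) := fun g B => by
    rw [Function.update_self]
    refine prod_congr rfl fun a _ => if_congr ?_ rfl rfl
    refine exists_congr fun j => and_congr_right fun hj => ?_
    rw [Function.update_of_ne (ne_of_mem_of_not_mem hj hiK)]
  have havg := sum_piFinset_sum_update P i
    fun g => ∏ a ∈ g i, (if ∃ j ∈ K, a ∈ g j then (1 : ℝ) else w)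
  simp only [hupdate, hP, nsmul_eq_mul] at havg
  refine le_of_mul_le_mul_left ?_ hC
  rw [← havg, sum_comm]
  calc ∑ B ∈ P, ∑ g ∈ Fintype.piFinset (fun _ : ι => P),
        ∏ a ∈ B, (if ∃ j ∈ K, a ∈ g j then 1 else w)
      ≤ ∑ B ∈ P, C ^ Fintype.card ι *
          ∏ _a ∈ B, (1 - ((Fintype.card α - Δ) / Fintype.card α) ^ #K * (1 - w)) :=
        sum_le_sum fun B _ => sum_piFinset_prod_ite_le hΔ B K (fun _ => hw0) fun _ => hw1
    _ = C * (C ^ Fintype.card ι *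
          (1 - ((Fintype.card α - Δ) / Fintype.card α) ^ #K * (1 - w)) ^ Δ) := by
        rw [sum_congr rfl fun B hB => by rw [prod_const, (mem_powersetCard.1 hB).2], sum_const,
          hP, nsmul_eq_mul]

end Finset

section Asymptotics

open Topology

theorem tendsto_one_sub_pow_of_tendsto_mul {ι : Type*} {l : Filter ι} {k : ι → ℕ} {x : ι → ℝ}
    {t : ℝ} (hx : Tendsto x l (𝓝 0)) (hkx : Tendsto (fun i => k i * x i) l (𝓝 t)) :
    Tendsto (fun i => (1 - x i) ^ k i) l (𝓝 (exp (-t))) := by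
  have hx1 : ∀ᶠ i in l, x i < 1 := hx.eventually (gt_mem_nhds one_pos)
  -- `-x / (1 - x) ≤ log (1 - x) ≤ -x`
  have hlog : Tendsto (fun i => k i * log (1 - x i)) l (𝓝 (-t)) := by
    have hlower : Tendsto (fun i => -(k i * x i) / (1 - x i)) l (𝓝 (-t)) := by
      have h := hkx.neg.div ((tendsto_const_nhds (x := (1 : ℝ))).sub hx) (by norm_num)
      rwa [sub_zero, div_one] at h
    refine tendsto_of_tendsto_of_tendsto_of_le_of_le' hlower hkx.neg ?_ ?_
    · filter_upwards [hx1] with i hi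
      calc -(k i * x i) / (1 - x i) = k i * (1 - (1 - x i)⁻¹) := by
            field_simp [(sub_pos.2 hi).ne']
            ring
        _ ≤ k i * log (1 - x i) :=
            mul_le_mul_of_nonneg_left (one_sub_inv_le_log_of_pos (sub_pos.2 hi)) (Nat.cast_nonneg _)
    · filter_upwards [hx1] with i hi
      calc k i * log (1 - x i) ≤ k i * (1 - x i - 1) :=
            mul_le_mul_of_nonneg_left (log_le_sub_one_of_pos (sub_pos.2 hi)) (Nat.cast_nonneg _)
        _ = -(k i * x i) := by ring
  refine ((continuous_exp.tendsto _).comp hlog).congr' ?_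
  filter_upwards [hx1] with i hi
  rw [Function.comp_apply, ← log_pow, exp_log (pow_pos (sub_pos.2 hi) _)]

theorem tendsto_natCast_mul_pow_of_mul_log_le {r : ℕ → ℝ} {Δ : ℕ → ℕ} {r₀ c : ℝ}
    (hr : Tendsto r atTop (𝓝 r₀)) (hr₀ : r₀ ∈ Set.Ioo 0 1) (hc : 1 + c * log r₀ < 0)
    (hΔ : ∀ᶠ n : ℕ in atTop, c * log n ≤ Δ n) :
    Tendsto (fun n : ℕ => (n : ℝ) * r n ^ Δ n) atTop (𝓝 0) := by
  set δ := -(1 + c * log r₀) / 2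
  have hδ : 0 < δ := by simp only [δ]; linarith
  have hlogr : Tendsto (fun n => 1 + c * log (r n)) atTop (𝓝 (1 + c * log r₀)) :=
    (((continuousAt_log hr₀.1.ne').tendsto.comp hr).const_mul c).const_add 1
  have hdecay : Tendsto (fun n : ℕ => exp (-δ * log n)) atTop (𝓝 0) :=
    tendsto_exp_atBot.comp <|
      (tendsto_log_atTop.comp tendsto_natCast_atTop_atTop).const_mul_atTop_of_neg (by linarith)
  refine squeeze_zero' ?_ ?_ hdecay
  · filter_upwards [hr.eventually (Ioo_mem_nhds hr₀.1 hr₀.2)] with n hn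
    exact mul_nonneg (Nat.cast_nonneg n) (pow_nonneg hn.1.le _)
  filter_upwards [hr.eventually (Ioo_mem_nhds hr₀.1 hr₀.2),
    hlogr.eventually (gt_mem_nhds (show 1 + c * log r₀ < -δ by simp only [δ]; linarith)),
    hΔ, eventually_ge_atTop 1] with n hrn hδn hΔn hn
  have hn0 : (0 : ℝ) < n := Nat.cast_pos.2 hn
  have hlogn : 0 ≤ log n := log_nonneg (Nat.one_le_cast.2 hn)
  have hlogr0 : log (r n) ≤ 0 := (log_neg hrn.1 hrn.2).le
  calc (n : ℝ) * r n ^ Δ n = exp (log n + Δ n * log (r n)) := by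
        rw [exp_add, exp_log hn0, exp_nat_mul, exp_log hrn.1]
    _ ≤ exp (log n + c * log n * log (r n)) :=
        exp_le_exp.2 (add_le_add_right (mul_le_mul_of_nonpos_right hΔn hlogr0) _)
    _ = exp (log n * (1 + c * log (r n))) := by ring_nf
    _ ≤ exp (-δ * log n) := by
        rw [mul_comm (-δ)]
        gcongr

theorem sub_log_two_le_log_div_ceil_rpow {θ x : ℝ} (hθ : 0 ≤ θ) (hx : 1 ≤ x) :
    (1 - θ) * log x - log 2 ≤ log (x / ⌈x ^ θ⌉₊) := by
  have hxθ : 1 ≤ x ^ θ := one_le_rpow hx hθ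
  have hceil : (⌈x ^ θ⌉₊ : ℝ) ≤ 2 * x ^ θ := by
    linarith [Nat.ceil_lt_add_one (zero_le_one.trans hxθ)]
  have hceil0 : (0 : ℝ) < ⌈x ^ θ⌉₊ := Nat.cast_pos.2 (Nat.ceil_pos.2 (by linarith))
  rw [log_div (by linarith) hceil0.ne']
  calc (1 - θ) * log x - log 2 = log x - log (2 * x ^ θ) := by
        rw [log_mul two_ne_zero (by linarith), log_rpow (by linarith)]
        ring
    _ ≤ log x - log ⌈x ^ θ⌉₊ := by gcongr

theorem ceil_rpow_regime {θ : ℝ} (hθ0 : 0 < θ) (hθ1 : θ < 1) {k : ℕ → ℕ}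
    (hk : ∀ n, k n = ⌈(n : ℝ) ^ θ⌉₊) :
    Tendsto (fun n => (k n : ℝ)) atTop atTop ∧ Tendsto (fun n : ℕ => log (n / k n)) atTop atTop ∧
      ∀ n : ℕ, 1 ≤ n → 1 ≤ k n ∧ k n ≤ n ∧ (1 - θ) * log n - log 2 ≤ log (n / k n) := by
  have hkn : ∀ n : ℕ, 1 ≤ n → 1 ≤ k n ∧ k n ≤ n ∧ (1 - θ) * log n - log 2 ≤ log (n / k n) := by
    intro n hn
    have hn' : (1 : ℝ) ≤ n := Nat.one_le_cast.2 hn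
    rw [hk n]
    exact ⟨Nat.one_le_ceil_iff.2 (by positivity),
      Nat.ceil_le.2 (rpow_le_self_of_one_le hn' hθ1.le),
      sub_log_two_le_log_div_ceil_rpow hθ0.le hn'⟩
  refine ⟨tendsto_atTop_mono (fun n => hk n ▸ Nat.le_ceil _)
    ((tendsto_rpow_atTop hθ0).comp tendsto_natCast_atTop_atTop), ?_, hkn⟩
  refine tendsto_atTop_mono' _ ((eventually_ge_atTop 1).mono fun n hn => (hkn n hn).2.2) ?_
  exact tendsto_atTop_add_const_right _ _
    ((tendsto_log_atTop.comp tendsto_natCast_atTop_atTop).const_mul_atTop (by linarith))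

theorem ceil_design_regime {k m Δ : ℕ → ℕ} {d : ℝ} (hd : 0 < d)
    (hk : Tendsto (fun n => (k n : ℝ)) atTop atTop)
    (hmk : Tendsto (fun n => (m n : ℝ) / k n) atTop atTop)
    (hΔ : ∀ n, Δ n = ⌈d * m n / k n⌉₊) :
    (∀ᶠ n in atTop, 1 ≤ Δ n ∧ Δ n ≤ m n) ∧
      Tendsto (fun n => (((m n : ℝ) - Δ n) / m n) ^ k n) atTop (𝓝 (exp (-d))) := by
  have hkΔ : Tendsto (fun n => k n * ((Δ n : ℝ) / m n)) atTop (𝓝 d) :=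
    ((tendsto_nat_ceil_mul_div_atTop hd.le).comp hmk).congr fun n => by
      rw [Function.comp_apply, hΔ n, mul_div_assoc d, div_div_eq_mul_div]
      ring
  have hk0 : ∀ᶠ n in atTop, (k n : ℝ) ≠ 0 := (hk.eventually_gt_atTop 0).mono fun _ h => h.ne'
  have hm0 : ∀ᶠ n in atTop, (0 : ℝ) < m n := by
    filter_upwards [hmk.eventually_gt_atTop 0] with n h
    exact Nat.cast_pos.2 (Nat.pos_of_ne_zero fun h0 => by simp [h0] at h)
  have hΔm : Tendsto (fun n => (Δ n : ℝ) / m n) atTop (𝓝 0) := by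
    refine (mul_zero d ▸ hkΔ.mul hk.inv_tendsto_atTop).congr' ?_
    filter_upwards [hk0] with n hn
    simp only [Pi.inv_apply]
    field_simp
  refine ⟨?_, (tendsto_one_sub_pow_of_tendsto_mul hΔm hkΔ).congr' ?_⟩
  · filter_upwards [hΔm.eventually (gt_mem_nhds one_pos), hm0, hmk.eventually_gt_atTop 0]
      with n hlt hm hmk
    refine ⟨by rw [hΔ n, Nat.one_le_ceil_iff, mul_div_assoc]; positivity, ?_⟩
    exact_mod_cast ((div_lt_one hm).1 hlt).le
  · filter_upwards [hm0] with n hm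
    rw [sub_div, div_self hm.ne']

theorem eventually_mul_log_le {θ ε L : ℝ} {Δ : ℕ → ℕ} (hθ1 : θ < 1) (hε : 0 < ε) (hL : 0 < L)
    (hΔ : ∀ᶠ n : ℕ in atTop, (1 + ε) / ((1 - θ) * L) * ((1 - θ) * log n - log 2) ≤ Δ n) :
    ∀ᶠ n : ℕ in atTop, (1 + ε / 2) / L * log n ≤ Δ n := by
  have hθ : 0 < 1 - θ := by linarith
  filter_upwards [hΔ, (tendsto_log_atTop.comp tendsto_natCast_atTop_atTop).eventually_ge_atTop
    (2 * (1 + ε) * log 2 / (ε * (1 - θ)))] with n hn hlog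
  rw [Function.comp_apply, div_le_iff₀ (by positivity)] at hlog
  refine le_trans ?_ hn
  rw [← sub_nonneg]
  have key : (1 + ε) / ((1 - θ) * L) * ((1 - θ) * log n - log 2) - (1 + ε / 2) / L * log n
      = (ε * (1 - θ) * log n - 2 * (1 + ε) * log 2) / (2 * (1 - θ) * L) := by
    field_simp
    ring
  rw [key]
  exact div_nonneg (by linarith) (by positivity)

end Asymptotics

section Measure

open Finset

instance (m : ℕ) : MeasurableSingletonClass (Finset (Fin m)) := ⟨fun _ => trivial⟩

theorem measurableSet_gtSpace {n m : ℕ} (s : Set (GTSpace n m)) : MeasurableSet s :=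
  s.toFinite.measurableSet

theorem lintegral_uniformFinset {α : Type*} [MeasurableSpace α] [MeasurableSingletonClass α]
    (s : Finset α) (f : α → ℝ≥0∞) :
    ∫⁻ x, f x ∂uniformFinset s = (#s : ℝ≥0∞)⁻¹ * ∑ x ∈ s, f x := by
  simp [uniformFinset, lintegral_smul_measure, lintegral_finsetSum_measure, lintegral_dirac]

theorem isProbabilityMeasure_uniformFinset {α : Type*} [MeasurableSpace α]
    [MeasurableSingletonClass α] {s : Finset α} (hs : s.Nonempty) :
    IsProbabilityMeasure (uniformFinset s) := by
  refine ⟨?_⟩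
  rw [← lintegral_one, lintegral_uniformFinset, sum_const, nsmul_one,
    ENNReal.inv_mul_cancel (Nat.cast_ne_zero.2 hs.card_pos.ne') (ENNReal.natCast_ne_top _)]

instance {α : Type*} [MeasurableSpace α] [MeasurableSingletonClass α] (s : Finset α) :
    IsFiniteMeasure (uniformFinset s) := by
  refine ⟨?_⟩
  rw [← lintegral_one, lintegral_uniformFinset, sum_const, nsmul_one]
  exact (ENNReal.inv_mul_le_one _).trans_lt ENNReal.one_lt_top

theorem lintegral_uniformFinset_ofReal_le {α : Type*} [MeasurableSpace α]
    [MeasurableSingletonClass α] {s : Finset α} {f : α → ℝ} {r : ℝ} (hf : ∀ x ∈ s, 0 ≤ f x)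
    (hsum : ∑ x ∈ s, f x ≤ #s * r) :
    ∫⁻ x, ENNReal.ofReal (f x) ∂uniformFinset s ≤ ENNReal.ofReal r := by
  rcases s.eq_empty_or_nonempty with rfl | hs
  · simp [uniformFinset]
  have hs0 : (0 : ℝ) < #s := Nat.cast_pos.2 hs.card_pos
  rw [lintegral_uniformFinset, ← ENNReal.ofReal_sum_of_nonneg hf, ← ENNReal.ofReal_natCast,
    ← ENNReal.ofReal_inv_of_pos hs0, ← ENNReal.ofReal_mul (inv_nonneg.2 hs0.le)]
  exact ENNReal.ofReal_le_ofReal ((inv_mul_le_iff₀ hs0).2 hsum)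

theorem lintegral_uniformFinset_le {α : Type*} [MeasurableSpace α] [MeasurableSingletonClass α]
    {s : Finset α} {f : α → ℝ≥0∞} {r : ℝ≥0∞} (hf : ∀ x ∈ s, f x ≤ r) :
    ∫⁻ x, f x ∂uniformFinset s ≤ r := by
  rw [lintegral_uniformFinset]
  calc (#s : ℝ≥0∞)⁻¹ * ∑ x ∈ s, f x ≤ (#s : ℝ≥0∞)⁻¹ * (#s * r) := by
        gcongr
        simpa using sum_le_sum hf
    _ ≤ r := by
        rw [← mul_assoc]
        exact mul_le_of_le_one_left (by simp) (ENNReal.inv_mul_le_one _)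

instance (p : ℝ) : IsFiniteMeasure (bern p) :=
  ⟨by simp [bern, ENNReal.add_lt_top]⟩

theorem isProbabilityMeasure_bern {p : ℝ} (hp0 : 0 ≤ p) (hp1 : p ≤ 1) :
    IsProbabilityMeasure (bern p) :=
  ⟨by simp [bern, ← ENNReal.ofReal_add hp0 (sub_nonneg.2 hp1)]⟩

theorem pi_bern_forall_mem_eq_true {ι : Type*} [Fintype ι] [DecidableEq ι] {p : ℝ} (hp0 : 0 ≤ p)
    (hp1 : p ≤ 1) (S : Finset ι) :
    Measure.pi (fun _ : ι => bern p) {U | ∀ a ∈ S, U a = true} = ENNReal.ofReal p ^ #S := by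
  have := isProbabilityMeasure_bern hp0 hp1
  have hcyl : {U : ι → Bool | ∀ a ∈ S, U a = true}
      = Set.univ.pi fun a => if a ∈ S then {true} else Set.univ := by
    ext U
    simp only [Set.mem_ofPred_eq, Set.mem_pi, Set.mem_univ, true_implies]
    refine forall_congr' fun a => ?_
    split_ifs <;> simp_all
  rw [hcyl, Measure.pi_pi]
  simp only [apply_ite (bern p), measure_univ]
  rw [prod_ite_mem, Finset.univ_inter, prod_const]
  simp [bern]

noncomputable def noiseMeasure (m : ℕ) (p q : ℝ) : Measure ((Fin m → Bool) × (Fin m → Bool)) :=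
  (Measure.pi fun _ : Fin m => bern p).prod (Measure.pi fun _ : Fin m => bern q)

def anyPositiveTestFlipped (n m : ℕ) : Set (GTSpace n m) := {ω | ∃ a, ω.2.2.2 a = true}

def healthyWithoutNegativeTest {n m : ℕ} (i : Fin n) : Set (GTSpace n m) :=
  {ω | ω.1 i = false ∧ negCount ω.2.1 (displayed ω.1 ω.2.1 ω.2.2.1 ω.2.2.2) i = 0}

theorem designSet_eq_piFinset (n m Δ : ℕ) :
    designSet n m Δ = Fintype.piFinset fun _ : Fin n => (univ : Finset (Fin m)).powersetCard Δ := by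
  ext g
  simp [designSet]

theorem isProbabilityMeasure_gtMeasure {n m Δ k : ℕ} {p q : ℝ} (hk : k ≤ n) (hΔ : Δ ≤ m)
    (hp0 : 0 ≤ p) (hp1 : p ≤ 1) (hq0 : 0 ≤ q) (hq1 : q ≤ 1) :
    IsProbabilityMeasure (gtMeasure n m Δ k p q) := by
  obtain ⟨S, -, hS⟩ := exists_subset_card_eq (show k ≤ #(univ : Finset (Fin n)) by simpa)
  obtain ⟨B, -, hB⟩ := exists_subset_card_eq (show Δ ≤ #(univ : Finset (Fin m)) by simpa)
  have := isProbabilityMeasure_uniformFinset (s := sigmaSet n k)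
    ⟨fun i => decide (i ∈ S), by simpa [sigmaSet] using hS⟩
  have := isProbabilityMeasure_uniformFinset (s := designSet n m Δ)
    ⟨fun _ => B, by simp [designSet, hB]⟩
  have := isProbabilityMeasure_bern hp0 hp1
  have := isProbabilityMeasure_bern hq0 hq1
  unfold gtMeasure
  infer_instance

theorem gtMeasure_apply {n m Δ k : ℕ} {p q : ℝ} (E : Set (GTSpace n m)) :
    gtMeasure n m Δ k p q E = ∫⁻ σ, ∫⁻ g, noiseMeasure m p q {UV | (σ, g, UV) ∈ E}
      ∂uniformFinset (designSet n m Δ) ∂uniformFinset (sigmaSet n k) := by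
  rw [gtMeasure, Measure.prod_apply (measurableSet_gtSpace E)]
  refine lintegral_congr fun σ => ?_
  rw [Measure.prod_apply (Set.toFinite _).measurableSet]
  rfl

theorem gtMeasure_healthyWithoutNegativeTest_le {n m Δ k : ℕ} {p q : ℝ} (hp0 : 0 ≤ p)
    (hp1 : p ≤ 1) (hq0 : 0 ≤ q) (hq1 : q ≤ 1) (hΔ : Δ ≤ m) (i : Fin n) :
    gtMeasure n m Δ k p q (healthyWithoutNegativeTest i)
      ≤ ENNReal.ofReal ((1 - (((m : ℝ) - Δ) / m) ^ k * (1 - p)) ^ Δ) := by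
  have := isProbabilityMeasure_bern hq0 hq1
  rw [gtMeasure_apply]
  refine lintegral_uniformFinset_le fun σ hσ => ?_
  set K : Finset (Fin n) := {j | σ j = true}
  have hK : #K = k := by simpa [sigmaSet] using hσ
  cases hσi : σ i
  case true => simp [healthyWithoutNegativeTest, hσi]
  have hiK : i ∉ K := by simp [K, hσi]
  set X : (Fin n → Finset (Fin m)) → ℝ :=
    fun g => ∏ a ∈ g i, (if ∃ j ∈ K, a ∈ g j then 1 else p)
  -- given the design, a test of `i` that avoids the infected shows positive only if flipped
  have hsection : ∀ g, noiseMeasure m p q {UV | (σ, g, UV) ∈ healthyWithoutNegativeTest i}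
      ≤ ENNReal.ofReal (X g) := by
    intro g
    calc _ ≤ noiseMeasure m p q
          ({U | ∀ a ∈ (g i).filter (fun a => ¬∃ j ∈ K, a ∈ g j), U a = true} ×ˢ Set.univ) := by
          refine measure_mono ?_
          rintro ⟨U, V⟩ ⟨-, hneg⟩
          simp only [Set.mem_prod, Set.mem_ofPred_eq, Set.mem_univ, and_true, mem_filter]
          rintro a ⟨ha, hfree⟩
          have hpos := filter_eq_empty_iff.1 (card_eq_zero.1 hneg) ha
          rw [displayed, if_neg (by simpa [K] using hfree)] at hpos
          simpa using hpos
      _ = ENNReal.ofReal (X g) := by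
          rw [noiseMeasure, Measure.prod_prod, pi_bern_forall_mem_eq_true hp0 hp1, measure_univ,
            mul_one, ← ENNReal.ofReal_pow hp0]
          simp only [X, prod_ite, prod_const_one, one_mul, prod_const]
  have hX : ∀ g, 0 ≤ X g := fun g => prod_nonneg fun a _ => by split_ifs <;> linarith
  calc _ ≤ ∫⁻ g, ENNReal.ofReal (X g) ∂uniformFinset (designSet n m Δ) := lintegral_mono hsection
    _ ≤ _ := by
      refine lintegral_uniformFinset_ofReal_le (fun g _ => hX g) ?_
      have := sum_piFinset_prod_mem_ite_le (α := Fin m) (by simpa using hΔ) hiK hp0 hp1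
      rw [designSet_eq_piFinset, Fintype.card_piFinset]
      simp only [Fintype.card_fin, hK] at this
      refine le_of_eq_of_le ?_ (this.trans_eq ?_)
      · simp only [X]
        congr!
      · simp

theorem gtMeasure_anyPositiveTestFlipped (n m Δ k : ℕ) (p : ℝ) :
    gtMeasure n m Δ k p 0 (anyPositiveTestFlipped n m) = 0 := by
  have hflip : Measure.pi (fun _ : Fin m => bern 0) {V | ∃ a, V a = true} = 0 := by
    refine measure_iUnion_null_iff.2 (fun a => ?_) |> measure_mono_null fun V ⟨a, ha⟩ =>
      Set.mem_iUnion.2 ⟨a, show V ∈ {V | ∀ b ∈ ({a} : Finset (Fin m)), V b = true} by simpa⟩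
    rw [pi_bern_forall_mem_eq_true le_rfl zero_le_one]
    simp
  have hE : anyPositiveTestFlipped n m
      = Set.univ ×ˢ Set.univ ×ˢ Set.univ ×ˢ {V | ∃ a, V a = true} := by
    ext
    simp [anyPositiveTestFlipped]
  rw [hE, gtMeasure, Measure.prod_prod, Measure.prod_prod, Measure.prod_prod, hflip]
  simp

theorem compRecovers_compl_subset {n m Δ : ℕ} (hΔ : Δ ≠ 0) :
    (compRecovers (n := n) (m := m) (1 / (Δ : ℝ)) Δ)ᶜ
      ⊆ anyPositiveTestFlipped n m ∪ ⋃ i, healthyWithoutNegativeTest i := by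
  rw [← Set.compl_subset_compl, compl_compl]
  rintro ⟨σ, g, U, V⟩ hω
  simp only [anyPositiveTestFlipped, healthyWithoutNegativeTest, Set.mem_compl_iff,
    Set.mem_union, Set.mem_iUnion, not_or, not_exists, not_and, Set.mem_ofPred_eq,
    Bool.not_eq_true] at hω
  obtain ⟨hV, hneg⟩ := hω
  funext i
  have hthreshold : 1 / (Δ : ℝ) * Δ = 1 := one_div_mul_cancel (Nat.cast_ne_zero.2 hΔ)
  simp only [compOutput, hthreshold, Nat.one_le_cast]
  cases hσi : σ i
  · simpa [Nat.one_le_iff_ne_zero] using hneg i hσi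
  · have : negCount g (displayed σ g U V) i = 0 := by
      refine card_eq_zero.2 (filter_eq_empty_iff.2 fun a ha => ?_)
      rw [displayed, if_pos ⟨i, hσi, ha⟩, hV a]
      simp
    simp [this]

theorem gtMeasure_compRecovers_compl_le {n m Δ k : ℕ} {p : ℝ} (hp0 : 0 ≤ p) (hp1 : p ≤ 1)
    (hΔ0 : Δ ≠ 0) (hΔ : Δ ≤ m) :
    gtMeasure n m Δ k p 0 (compRecovers (n := n) (m := m) (1 / (Δ : ℝ)) Δ)ᶜ
      ≤ ENNReal.ofReal (n * (1 - (((m : ℝ) - Δ) / m) ^ k * (1 - p)) ^ Δ) := by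
  calc _ ≤ gtMeasure n m Δ k p 0 (anyPositiveTestFlipped n m)
          + ∑ i, gtMeasure n m Δ k p 0 (healthyWithoutNegativeTest i) :=
        (measure_mono (compRecovers_compl_subset hΔ0)).trans <|
          (measure_union_le _ _).trans (add_le_add_right (measure_iUnion_fintype_le _ _) _)
    _ ≤ 0 + ∑ _i : Fin n, ENNReal.ofReal ((1 - (((m : ℝ) - Δ) / m) ^ k * (1 - p)) ^ Δ) := by
        rw [gtMeasure_anyPositiveTestFlipped]
        gcongr with i
        exact gtMeasure_healthyWithoutNegativeTest_le hp0 hp1 le_rfl zero_le_one hΔ i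
    _ = _ := by
        rw [zero_add, sum_const, card_univ, Fintype.card_fin, nsmul_eq_mul,
          ← ENNReal.ofReal_natCast, ← ENNReal.ofReal_mul (Nat.cast_nonneg n)]

end Measure

open Topology in
theorem compRevZ_regime {p θ ε d : ℝ} (hp0 : 0 < p) (hp1 : p < 1) (hθ0 : 0 < θ) (hθ1 : θ < 1)
    (hε : 0 < ε) (hd : 0 < d) {k m Δ : ℕ → ℕ} (hk : ∀ n, k n = ⌈(n : ℝ) ^ θ⌉₊)
    (hm : ∀ n : ℕ, (1 + ε) * (1 / (1 - θ) * bRevZ p d * (k n * log (n / k n))) ≤ m n)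
    (hΔ : ∀ n, Δ n = ⌈d * m n / k n⌉₊) :
    (∀ᶠ n in atTop, k n ≤ n ∧ 1 ≤ Δ n ∧ Δ n ≤ m n) ∧
      Tendsto (fun n : ℕ => (n : ℝ) * (1 - (((m n : ℝ) - Δ n) / m n) ^ k n * (1 - p)) ^ Δ n)
        atTop (𝓝 0) := by
  set r₀ := 1 - exp (-d) * (1 - p)
  set L := -log r₀
  have hexp : exp (-d) < 1 := exp_lt_one_iff.2 (by linarith)
  have hr₀ : r₀ ∈ Set.Ioo 0 1 := ⟨by nlinarith [exp_pos (-d)], by nlinarith [exp_pos (-d)]⟩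
  have hL : 0 < L := neg_pos.2 (log_neg hr₀.1 hr₀.2)
  have hθ : 0 < 1 - θ := by linarith
  have hb : bRevZ p d = 1 / (d * L) := by
    simp only [bRevZ, L, r₀]
    ring
  obtain ⟨hktop, hlogk, hkn⟩ := ceil_rpow_regime hθ0 hθ1 hk
  have hmk : ∀ n, 1 ≤ n → (1 + ε) / ((1 - θ) * (d * L)) * log (n / k n) ≤ m n / k n := by
    intro n hn
    rw [le_div_iff₀ (Nat.cast_pos.2 (hkn n hn).1)]
    refine le_of_eq_of_le ?_ (hm n)
    rw [hb]
    field_simp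
  obtain ⟨hΔm, hρ⟩ := ceil_design_regime hd hktop
    (tendsto_atTop_mono' _ ((eventually_ge_atTop 1).mono hmk)
      (hlogk.const_mul_atTop (by positivity))) hΔ
  have hΔlog : ∀ᶠ n : ℕ in atTop, (1 + ε / 2) / L * log n ≤ Δ n := by
    refine eventually_mul_log_le hθ1 hε hL ((eventually_ge_atTop 1).mono fun n hn => ?_)
    calc (1 + ε) / ((1 - θ) * L) * ((1 - θ) * log n - log 2)
        ≤ (1 + ε) / ((1 - θ) * L) * log (n / k n) :=
          mul_le_mul_of_nonneg_left (hkn n hn).2.2 (by positivity)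
      _ = d * ((1 + ε) / ((1 - θ) * (d * L)) * log (n / k n)) := by field_simp
      _ ≤ d * m n / k n := by rw [mul_div_assoc]; exact mul_le_mul_of_nonneg_left (hmk n hn) hd.le
      _ ≤ Δ n := hΔ n ▸ Nat.le_ceil _
  refine ⟨?_, tendsto_natCast_mul_pow_of_mul_log_le ((hρ.mul_const _).const_sub 1) hr₀ ?_ hΔlog⟩
  · filter_upwards [hΔm, eventually_ge_atTop 1] with n h hn
    exact ⟨(hkn n hn).2.1, h⟩
  · have hc : (1 + ε / 2) / L * log r₀ = -(1 + ε / 2) := by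
      rw [show log r₀ = -L from (neg_neg _).symm]
      field_simp
    linarith

theorem noisy_COMP_revZ_general
    (p θ ε d : ℝ)
    (hp0 : 0 < p) (hp1 : p < 1)
    (hθ0 : 0 < θ) (hθ1 : θ < 1) (hε : 0 < ε)
    (hd : 0 < d)
    (k m Δ : ℕ → ℕ)
    (hk : ∀ n, k n = ⌈(n : ℝ) ^ θ⌉₊)
    (hm : ∀ n : ℕ,
      (1 + ε) * (1 / (1 - θ) * bRevZ p d * (k n * Real.log (n / k n))) ≤ m n)
    (hΔ : ∀ n, Δ n = ⌈d * m n / k n⌉₊) :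
    Filter.Tendsto
      (fun n => gtMeasure n (m n) (Δ n) (k n) p 0
        (compRecovers (n := n) (m := m n) (1 / (Δ n : ℝ)) (Δ n)))
      Filter.atTop (nhds 1) := by
  obtain ⟨hregime, hbound⟩ := compRevZ_regime hp0 hp1 hθ0 hθ1 hε hd hk hm hΔ
  have hfail : Tendsto (fun n => gtMeasure n (m n) (Δ n) (k n) p 0
      (compRecovers (n := n) (m := m n) (1 / (Δ n : ℝ)) (Δ n))ᶜ) atTop (nhds 0) := by
    refine tendsto_of_tendsto_of_tendsto_of_le_of_le' tendsto_const_nhds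
      (ENNReal.ofReal_zero ▸ ENNReal.tendsto_ofReal hbound) (Eventually.of_forall fun _ => zero_le)
      ?_
    filter_upwards [hregime] with n hn
    exact gtMeasure_compRecovers_compl_le hp0.le hp1.le (by omega) hn.2.2
  have hsucc := ENNReal.Tendsto.sub tendsto_const_nhds hfail (Or.inl ENNReal.one_ne_top)
  rw [tsub_zero] at hsucc
  refine hsucc.congr' ?_
  filter_upwards [hregime] with n hn
  have := isProbabilityMeasure_gtMeasure hn.1 hn.2.2 hp0.le hp1.le le_rfl zero_le_one
  rw [prob_compl_eq_one_sub (measurableSet_gtSpace _),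
    ENNReal.sub_sub_cancel ENNReal.one_ne_top prob_le_one]

/-- **Noisy COMP for the reverse Z channel** (Corollary 2.9).  With `q = 0`, `0 < p < 1`,
`k = ⌈n^θ⌉`, if `m ≥ (1+ε)·m_{COMP,revZ}` with
`m_{COMP,revZ} = (1/(1-θ))·min_d 1/(-d·log(1-e^{-d}(1-p)))·k·log(n/k)`, and the design
uses the minimizing `d` (with threshold `α = 1/Δ`), then noisy COMP recovers `σ` w.h.p. -/
theorem noisy_COMP_revZ
    (p θ ε d : ℝ)
    (hp0 : 0 < p) (hp1 : p < 1)
    (hθ0 : 0 < θ) (hθ1 : θ < 1) (hε : 0 < ε)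
    (hd : 0 < d)
    (hopt : IsLeast (compSetRevZ p) (bRevZ p d))
    (k m Δ : ℕ → ℕ)
    (hk : ∀ n, k n = ⌈(n : ℝ) ^ θ⌉₊)
    (hm : ∀ n : ℕ,
      (1 + ε) * (1 / (1 - θ) * bRevZ p d * (k n * Real.log (n / k n))) ≤ m n)
    (hΔ : ∀ n, Δ n = ⌈d * m n / k n⌉₊) :
    Filter.Tendsto
      (fun n => gtMeasure n (m n) (Δ n) (k n) p 0
        (compRecovers (n := n) (m := m n) (1 / (Δ n : ℝ)) (Δ n)))
      Filter.atTop (nhds 1) :=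
  noisy_COMP_revZ_general p θ ε d hp0 hp1 hθ0 hθ1 hε hd k m Δ hk hm hΔ
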